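/- For two symmetry parameters s₁, s₂ with associated functions f₁ = f_{s₁}, f₂ = f_{s₂} ∈ R[u], define f̂ = 𝒴₁ðf₂ + 𝒴̄₁ð̄f₂ + f₁∂_u f₂ − 𝒴₂ðf₁ − 𝒴̄₂ð̄f₁ − f₂∂_u f₁. Then f̂ = f_{[s₁,s₂]}, i.e. f̂ = T̂ + (u/2)(ð𝒴̂ + ð̄𝒴̄̂) where (𝒴̂,𝒴̄̂,T̂) = [s₁,s₂]. (This expresses the closure, under the modified Lie bracket, of the u-components ξ^u = f of the asymptotic Killing vectors of Theorem 1.) -/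

import Mathlib

/-!
Common setup: we work over `ℂ` with flat conformal factor `φ̃ = 0`, so `P = √2` and the
eth operators reduce to `ð = √2 ∂_ζ̄` and `ð̄ = √2 ∂_ζ` on the ring `R[u]` of polynomials
in `u` with coefficients in `R = ℂ[ζ,ζ⁻¹,ζ̄,ζ̄⁻¹]`, which also carries `∂_u`.

`R[u]` is modelled as `RU := AddMonoidAlgebra ℂ (ℤ × ℤ × ℕ)`, the monomial
`single (m,n,k) 1` representing `ζ^m ζ̄^n u^k`; `R` is `AddMonoidAlgebra ℂ (ℤ × ℤ)`, and
`ℂ[ζ,ζ⁻¹]`, `ℂ[ζ̄,ζ̄⁻¹]` are copies of `AddMonoidAlgebra ℂ ℤ`, all included into `RU`.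
-/

/-- `R[u]`, with `single (m,n,k) 1 = ζ^m ζ̄^n u^k`. -/
abbrev RU : Type := AddMonoidAlgebra ℂ (ℤ × ℤ × ℕ)

/-- `R = ℂ[ζ,ζ⁻¹,ζ̄,ζ̄⁻¹]`. -/
abbrev LR : Type := AddMonoidAlgebra ℂ (ℤ × ℤ)

/-- A copy of `ℂ[ζ,ζ⁻¹]` (resp. `ℂ[ζ̄,ζ̄⁻¹]`). -/
abbrev W : Type := AddMonoidAlgebra ℂ ℤ

/-- `ð = √2 ∂_ζ̄` on `R[u]`. -/
noncomputable def eth : RU →ₗ[ℂ] RU :=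
  (AddMonoidAlgebra.coeffLinearEquiv ℂ).symm.toLinearMap ∘ₗ
    (Finsupp.lsum ℂ fun p : ℤ × ℤ × ℕ =>
    ((Real.sqrt 2 : ℂ) * p.2.1) • Finsupp.lsingle (p.1, p.2.1 - 1, p.2.2) :
      (ℤ × ℤ × ℕ →₀ ℂ) →ₗ[ℂ] (ℤ × ℤ × ℕ →₀ ℂ)) ∘ₗ (AddMonoidAlgebra.coeffLinearEquiv ℂ).toLinearMap

/-- `ð̄ = √2 ∂_ζ` on `R[u]`. -/
noncomputable def ethBar : RU →ₗ[ℂ] RU :=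
  (AddMonoidAlgebra.coeffLinearEquiv ℂ).symm.toLinearMap ∘ₗ
    (Finsupp.lsum ℂ fun p : ℤ × ℤ × ℕ =>
    ((Real.sqrt 2 : ℂ) * p.1) • Finsupp.lsingle (p.1 - 1, p.2.1, p.2.2) :
      (ℤ × ℤ × ℕ →₀ ℂ) →ₗ[ℂ] (ℤ × ℤ × ℕ →₀ ℂ)) ∘ₗ (AddMonoidAlgebra.coeffLinearEquiv ℂ).toLinearMap

/-- `∂_u` on `R[u]`. -/
noncomputable def du : RU →ₗ[ℂ] RU :=
  (AddMonoidAlgebra.coeffLinearEquiv ℂ).symm.toLinearMap ∘ₗ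
    (Finsupp.lsum ℂ fun p : ℤ × ℤ × ℕ =>
    (p.2.2 : ℂ) • Finsupp.lsingle (p.1, p.2.1, p.2.2 - 1) :
      (ℤ × ℤ × ℕ →₀ ℂ) →ₗ[ℂ] (ℤ × ℤ × ℕ →₀ ℂ)) ∘ₗ (AddMonoidAlgebra.coeffLinearEquiv ℂ).toLinearMap

/-- The element `u ∈ R[u]`. -/
noncomputable def uVar : RU := AddMonoidAlgebra.single ((0 : ℤ), (0 : ℤ), (1 : ℕ)) (1 : ℂ)

/-- The inclusion `ℂ[ζ̄,ζ̄⁻¹] ↪ R[u]`, `ζ̄^n ↦ ζ̄^n`. -/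
noncomputable def incY : W →ₗ[ℂ] RU :=
  (AddMonoidAlgebra.coeffLinearEquiv ℂ).symm.toLinearMap ∘ₗ
    (Finsupp.lsum ℂ fun n : ℤ => Finsupp.lsingle (0, n, 0) :
      (ℤ →₀ ℂ) →ₗ[ℂ] (ℤ × ℤ × ℕ →₀ ℂ)) ∘ₗ (AddMonoidAlgebra.coeffLinearEquiv ℂ).toLinearMap

/-- The inclusion `ℂ[ζ,ζ⁻¹] ↪ R[u]`, `ζ^m ↦ ζ^m`. -/
noncomputable def incYb : W →ₗ[ℂ] RU :=
  (AddMonoidAlgebra.coeffLinearEquiv ℂ).symm.toLinearMap ∘ₗ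
    (Finsupp.lsum ℂ fun m : ℤ => Finsupp.lsingle (m, 0, 0) :
      (ℤ →₀ ℂ) →ₗ[ℂ] (ℤ × ℤ × ℕ →₀ ℂ)) ∘ₗ (AddMonoidAlgebra.coeffLinearEquiv ℂ).toLinearMap

/-- The inclusion `R ↪ R[u]`. -/
noncomputable def incT : LR →ₗ[ℂ] RU :=
  (AddMonoidAlgebra.coeffLinearEquiv ℂ).symm.toLinearMap ∘ₗ
    (Finsupp.lsum ℂ fun q : ℤ × ℤ => Finsupp.lsingle (q.1, q.2, 0) :
      (ℤ × ℤ →₀ ℂ) →ₗ[ℂ] (ℤ × ℤ × ℕ →₀ ℂ)) ∘ₗ (AddMonoidAlgebra.coeffLinearEquiv ℂ).toLinearMap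

/-- `ð` on the copy `ℂ[ζ̄,ζ̄⁻¹]` (equivalently `ð̄` on the copy `ℂ[ζ,ζ⁻¹]`):
`√2` times the formal derivative. -/
noncomputable def ethW : W →ₗ[ℂ] W :=
  (AddMonoidAlgebra.coeffLinearEquiv ℂ).symm.toLinearMap ∘ₗ
    (Finsupp.lsum ℂ fun n : ℤ => ((Real.sqrt 2 : ℂ) * n) • Finsupp.lsingle (n - 1) :
      (ℤ →₀ ℂ) →ₗ[ℂ] (ℤ →₀ ℂ)) ∘ₗ (AddMonoidAlgebra.coeffLinearEquiv ℂ).toLinearMap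

/-- `ð = √2 ∂_ζ̄` on `R`. -/
noncomputable def ethR : LR →ₗ[ℂ] LR :=
  (AddMonoidAlgebra.coeffLinearEquiv ℂ).symm.toLinearMap ∘ₗ
    (Finsupp.lsum ℂ fun q : ℤ × ℤ => ((Real.sqrt 2 : ℂ) * q.2) • Finsupp.lsingle (q.1, q.2 - 1) :
      (ℤ × ℤ →₀ ℂ) →ₗ[ℂ] (ℤ × ℤ →₀ ℂ)) ∘ₗ (AddMonoidAlgebra.coeffLinearEquiv ℂ).toLinearMap

/-- `ð̄ = √2 ∂_ζ` on `R`. -/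
noncomputable def ethBarR : LR →ₗ[ℂ] LR :=
  (AddMonoidAlgebra.coeffLinearEquiv ℂ).symm.toLinearMap ∘ₗ
    (Finsupp.lsum ℂ fun q : ℤ × ℤ => ((Real.sqrt 2 : ℂ) * q.1) • Finsupp.lsingle (q.1 - 1, q.2) :
      (ℤ × ℤ →₀ ℂ) →ₗ[ℂ] (ℤ × ℤ →₀ ℂ)) ∘ₗ (AddMonoidAlgebra.coeffLinearEquiv ℂ).toLinearMap

/-- The inclusion `ℂ[ζ̄,ζ̄⁻¹] ↪ R`. -/
noncomputable def jY : W →ₗ[ℂ] LR :=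
  (AddMonoidAlgebra.coeffLinearEquiv ℂ).symm.toLinearMap ∘ₗ
    (Finsupp.lsum ℂ fun n : ℤ => Finsupp.lsingle (0, n) :
      (ℤ →₀ ℂ) →ₗ[ℂ] (ℤ × ℤ →₀ ℂ)) ∘ₗ (AddMonoidAlgebra.coeffLinearEquiv ℂ).toLinearMap

/-- The inclusion `ℂ[ζ,ζ⁻¹] ↪ R`. -/
noncomputable def jYb : W →ₗ[ℂ] LR :=
  (AddMonoidAlgebra.coeffLinearEquiv ℂ).symm.toLinearMap ∘ₗ
    (Finsupp.lsum ℂ fun m : ℤ => Finsupp.lsingle (m, 0) :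
      (ℤ →₀ ℂ) →ₗ[ℂ] (ℤ × ℤ →₀ ℂ)) ∘ₗ (AddMonoidAlgebra.coeffLinearEquiv ℂ).toLinearMap

/-- A symmetry parameter `s = (𝒴, 𝒴̄, T)` with `𝒴 ∈ ℂ[ζ̄,ζ̄⁻¹]`, `𝒴̄ ∈ ℂ[ζ,ζ⁻¹]`
(so that `ð̄𝒴 = 0 = ð𝒴̄`, the conformal Killing equations) and `T ∈ R`. -/
structure SymParam : Type where
  /-- `𝒴`, a function of `ζ̄`. -/
  cY : W
  /-- `𝒴̄`, a function of `ζ`. -/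
  cYb : W
  /-- The supertranslation part `T ∈ R`. -/
  T : LR

/-- `ψ_s = ð𝒴 + ð̄𝒴̄ ∈ R`. -/
noncomputable def psiR (s : SymParam) : LR := jY (ethW s.cY) + jYb (ethW s.cYb)

/-- `f_s = T + (u/2) ψ_s ∈ R[u]`. -/
noncomputable def fOf (s : SymParam) : RU :=
  incT s.T + (1 / 2 : ℂ) • (uVar * incT (psiR s))

/-- The `𝔟𝔪𝔰₄` bracket `[s₁,s₂] = ŝ` on symmetry parameters:
`𝒴̂ = 𝒴₁ð𝒴₂ − 𝒴₂ð𝒴₁`, `𝒴̄̂ = 𝒴̄₁ð̄𝒴̄₂ − 𝒴̄₂ð̄𝒴̄₁`,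
`T̂ = 𝒴₁ðT₂ + 𝒴̄₁ð̄T₂ − 𝒴₂ðT₁ − 𝒴̄₂ð̄T₁ − ½(ψ₁T₂ − ψ₂T₁)`. -/
noncomputable def sBracket (s₁ s₂ : SymParam) : SymParam where
  cY := s₁.cY * ethW s₂.cY - s₂.cY * ethW s₁.cY
  cYb := s₁.cYb * ethW s₂.cYb - s₂.cYb * ethW s₁.cYb
  T := jY s₁.cY * ethR s₂.T + jYb s₁.cYb * ethBarR s₂.T
      - jY s₂.cY * ethR s₁.T - jYb s₂.cYb * ethBarR s₁.T
      - (1 / 2 : ℂ) • (psiR s₁ * s₂.T - psiR s₂ * s₁.T)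

/-!
The eth operators kill `u` and `∂_u` kills `R`, so `ð f_s = ðT + (u/2) ð²𝒴`,
`ð̄ f_s = ð̄T + (u/2) ð̄²𝒴̄` and `∂_u f_s = ψ_s/2`. In `f̂` the `u²`-terms cancel by antisymmetry,
the `u`-terms `𝒴₁ð²𝒴₂ − 𝒴₂ð²𝒴₁ + (bar)` are `ð𝒴̂ + ð̄𝒴̄̂` by the Leibniz rule, and the `u⁰`-terms
are exactly `T̂`.
-/

namespace AddMonoidAlgebra

variable {k G H : Type*} [CommSemiring k]

lemma lsum_smul_lsingle_single (c : G → k) (g : G → H) (a : G) (x : k) :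
    ((coeffLinearEquiv k).symm.toLinearMap ∘ₗ
      (Finsupp.lsum k fun p => c p • Finsupp.lsingle (g p) : (G →₀ k) →ₗ[k] (H →₀ k)) ∘ₗ
      (coeffLinearEquiv k).toLinearMap) (single a x) = single (g a) (c a * x) := by
  simp only [LinearMap.comp_apply, LinearEquiv.coe_coe, coeffLinearEquiv_apply, coeff_single,
    Finsupp.lsum_single, LinearMap.smul_apply, Finsupp.lsingle_apply, Finsupp.smul_single,
    smul_eq_mul, coeffLinearEquiv_symm_apply]
  rfl

lemma lsum_lsingle_single (g : G → H) (a : G) (x : k) :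
    ((coeffLinearEquiv k).symm.toLinearMap ∘ₗ
      (Finsupp.lsum k fun p => Finsupp.lsingle (g p) : (G →₀ k) →ₗ[k] (H →₀ k)) ∘ₗ
      (coeffLinearEquiv k).toLinearMap) (single a x) = single (g a) x := by
  simp only [LinearMap.comp_apply, LinearEquiv.coe_coe, coeffLinearEquiv_apply, coeff_single,
    Finsupp.lsum_single, Finsupp.lsingle_apply, coeffLinearEquiv_symm_apply]
  rfl

lemma apply_eq_of_single {M : Type*} [AddCommMonoid M] [Module k M] {f g : k[G] →ₗ[k] M}
    (h : ∀ a x, f (single a x) = g (single a x)) (y : k[G]) : f y = g y :=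
  LinearMap.congr_fun (lhom_ext' fun a => LinearMap.ext fun x => h a x) y

lemma map_mul_of_single [AddMonoid G] [AddMonoid H] (f : k[G] →ₗ[k] k[H])
    (h : ∀ a b (x y : k), f (single a x * single b y) = f (single a x) * f (single b y))
    (p q : k[G]) : f (p * q) = f p * f q := by
  induction p using induction_linear with
  | zero => simp
  | add p₁ p₂ h₁ h₂ => simp only [add_mul, map_add, h₁, h₂]
  | single a x =>
    induction q using induction_linear with
    | zero => simp
    | add q₁ q₂ h₁ h₂ => simp only [mul_add, map_add, h₁, h₂]
    | single b y => exact h a b x y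

lemma leibniz_of_single [AddMonoid G] (D : k[G] →ₗ[k] k[G])
    (h : ∀ a b (x y : k), D (single a x * single b y) =
      D (single a x) * single b y + single a x * D (single b y))
    (p q : k[G]) : D (p * q) = D p * q + p * D q := by
  induction p using induction_linear with
  | zero => simp
  | add p₁ p₂ h₁ h₂ => simp only [add_mul, map_add, h₁, h₂]; abel
  | single a x =>
    induction q using induction_linear with
    | zero => simp
    | add q₁ q₂ h₁ h₂ => simp only [mul_add, map_add, h₁, h₂]; abel
    | single b y => exact h a b x y

end AddMonoidAlgebra

open AddMonoidAlgebra

lemma eth_single (p : ℤ × ℤ × ℕ) (x : ℂ) :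
    eth (single p x) = single (p.1, p.2.1 - 1, p.2.2) ((Real.sqrt 2 : ℂ) * p.2.1 * x) :=
  lsum_smul_lsingle_single _ _ p x

lemma ethBar_single (p : ℤ × ℤ × ℕ) (x : ℂ) :
    ethBar (single p x) = single (p.1 - 1, p.2.1, p.2.2) ((Real.sqrt 2 : ℂ) * p.1 * x) :=
  lsum_smul_lsingle_single _ _ p x

lemma du_single (p : ℤ × ℤ × ℕ) (x : ℂ) :
    du (single p x) = single (p.1, p.2.1, p.2.2 - 1) ((p.2.2 : ℂ) * x) :=
  lsum_smul_lsingle_single _ _ p x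

lemma ethW_single (n : ℤ) (x : ℂ) :
    ethW (single n x) = single (n - 1) ((Real.sqrt 2 : ℂ) * n * x) :=
  lsum_smul_lsingle_single _ _ n x

lemma ethR_single (q : ℤ × ℤ) (x : ℂ) :
    ethR (single q x) = single (q.1, q.2 - 1) ((Real.sqrt 2 : ℂ) * q.2 * x) :=
  lsum_smul_lsingle_single _ _ q x

lemma ethBarR_single (q : ℤ × ℤ) (x : ℂ) :
    ethBarR (single q x) = single (q.1 - 1, q.2) ((Real.sqrt 2 : ℂ) * q.1 * x) :=
  lsum_smul_lsingle_single _ _ q x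

lemma incY_single (n : ℤ) (x : ℂ) : incY (single n x) = single (0, n, 0) x :=
  lsum_lsingle_single _ n x

lemma incYb_single (m : ℤ) (x : ℂ) : incYb (single m x) = single (m, 0, 0) x :=
  lsum_lsingle_single _ m x

lemma incT_single (q : ℤ × ℤ) (x : ℂ) : incT (single q x) = single (q.1, q.2, 0) x :=
  lsum_lsingle_single _ q x

lemma jY_single (n : ℤ) (x : ℂ) : jY (single n x) = single (0, n) x :=
  lsum_lsingle_single _ n x

lemma jYb_single (m : ℤ) (x : ℂ) : jYb (single m x) = single (m, 0) x :=
  lsum_lsingle_single _ m x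

lemma uVar_eq_single : uVar = single (0, 0, 1) 1 := rfl

lemma incT_mul (a b : LR) : incT (a * b) = incT a * incT b :=
  map_mul_of_single incT (fun _ _ _ _ => by
    simp only [single_mul_single, incT_single, Prod.fst_add, Prod.snd_add, Prod.mk_add_mk,
      add_zero]) a b

lemma jY_mul (a b : W) : jY (a * b) = jY a * jY b :=
  map_mul_of_single jY (fun _ _ _ _ => by
    simp only [single_mul_single, jY_single, Prod.mk_add_mk, add_zero]) a b

lemma jYb_mul (a b : W) : jYb (a * b) = jYb a * jYb b :=
  map_mul_of_single jYb (fun _ _ _ _ => by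
    simp only [single_mul_single, jYb_single, Prod.mk_add_mk, add_zero]) a b

lemma ethW_mul (a b : W) : ethW (a * b) = ethW a * b + a * ethW b :=
  leibniz_of_single ethW (fun m n x y => by
    simp only [single_mul_single, ethW_single]
    rw [show m - 1 + n = m + n - 1 by ring, show m + (n - 1) = m + n - 1 by ring, ← single_add]
    congr 1
    push_cast
    ring) a b

lemma incT_jY (y : W) : incT (jY y) = incY y :=
  apply_eq_of_single (f := incT ∘ₗ jY) (fun _ _ => by
    simp only [LinearMap.comp_apply, jY_single, incT_single, incY_single]) y

lemma incT_jYb (y : W) : incT (jYb y) = incYb y :=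
  apply_eq_of_single (f := incT ∘ₗ jYb) (fun _ _ => by
    simp only [LinearMap.comp_apply, jYb_single, incT_single, incYb_single]) y

lemma ethR_jY (y : W) : ethR (jY y) = jY (ethW y) :=
  apply_eq_of_single (f := ethR ∘ₗ jY) (g := jY ∘ₗ ethW) (fun _ _ => by
    simp only [LinearMap.comp_apply, jY_single, ethR_single, ethW_single]) y

lemma ethBarR_jYb (y : W) : ethBarR (jYb y) = jYb (ethW y) :=
  apply_eq_of_single (f := ethBarR ∘ₗ jYb) (g := jYb ∘ₗ ethW) (fun _ _ => by
    simp only [LinearMap.comp_apply, jYb_single, ethBarR_single, ethW_single]) y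

lemma ethR_jYb (y : W) : ethR (jYb y) = 0 :=
  apply_eq_of_single (f := ethR ∘ₗ jYb) (g := 0) (fun _ _ => by
    simp only [LinearMap.comp_apply, jYb_single, ethR_single, Int.cast_zero, mul_zero, zero_mul,
      single_zero, LinearMap.zero_apply]) y

lemma ethBarR_jY (y : W) : ethBarR (jY y) = 0 :=
  apply_eq_of_single (f := ethBarR ∘ₗ jY) (g := 0) (fun _ _ => by
    simp only [LinearMap.comp_apply, jY_single, ethBarR_single, Int.cast_zero, mul_zero, zero_mul,
      single_zero, LinearMap.zero_apply]) y

lemma eth_incT (x : LR) : eth (incT x) = incT (ethR x) :=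
  apply_eq_of_single (f := eth ∘ₗ incT) (g := incT ∘ₗ ethR) (fun _ _ => by
    simp only [LinearMap.comp_apply, incT_single, eth_single, ethR_single]) x

lemma ethBar_incT (x : LR) : ethBar (incT x) = incT (ethBarR x) :=
  apply_eq_of_single (f := ethBar ∘ₗ incT) (g := incT ∘ₗ ethBarR) (fun _ _ => by
    simp only [LinearMap.comp_apply, incT_single, ethBar_single, ethBarR_single]) x

lemma du_incT (x : LR) : du (incT x) = 0 :=
  apply_eq_of_single (f := du ∘ₗ incT) (g := 0) (fun _ _ => by
    simp only [LinearMap.comp_apply, incT_single, du_single, Nat.cast_zero, zero_mul,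
      single_zero, LinearMap.zero_apply]) x

lemma eth_uVar_mul_incT (x : LR) : eth (uVar * incT x) = uVar * incT (ethR x) :=
  apply_eq_of_single (f := eth ∘ₗ LinearMap.mulLeft ℂ uVar ∘ₗ incT)
    (g := LinearMap.mulLeft ℂ uVar ∘ₗ incT ∘ₗ ethR)
    (fun _ _ => by simp [uVar_eq_single, single_mul_single, incT_single, eth_single, ethR_single]) x

lemma ethBar_uVar_mul_incT (x : LR) : ethBar (uVar * incT x) = uVar * incT (ethBarR x) :=
  apply_eq_of_single (f := ethBar ∘ₗ LinearMap.mulLeft ℂ uVar ∘ₗ incT)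
    (g := LinearMap.mulLeft ℂ uVar ∘ₗ incT ∘ₗ ethBarR)
    (fun _ _ => by
      simp [uVar_eq_single, single_mul_single, incT_single, ethBar_single, ethBarR_single]) x

lemma du_uVar_mul_incT (x : LR) : du (uVar * incT x) = incT x :=
  apply_eq_of_single (f := du ∘ₗ LinearMap.mulLeft ℂ uVar ∘ₗ incT) (g := incT)
    (fun _ _ => by simp [uVar_eq_single, single_mul_single, incT_single, du_single]) x

lemma ethR_psiR (s : SymParam) : ethR (psiR s) = jY (ethW (ethW s.cY)) := by
  rw [psiR, map_add, ethR_jY, ethR_jYb, add_zero]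

lemma ethBarR_psiR (s : SymParam) : ethBarR (psiR s) = jYb (ethW (ethW s.cYb)) := by
  rw [psiR, map_add, ethBarR_jY, ethBarR_jYb, zero_add]

lemma eth_fOf (s : SymParam) :
    eth (fOf s) = incT (ethR s.T) + (1 / 2 : ℂ) • (uVar * incY (ethW (ethW s.cY))) := by
  rw [fOf, map_add, map_smul, eth_incT, eth_uVar_mul_incT, ethR_psiR, incT_jY]

lemma ethBar_fOf (s : SymParam) :
    ethBar (fOf s) = incT (ethBarR s.T) + (1 / 2 : ℂ) • (uVar * incYb (ethW (ethW s.cYb))) := by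
  rw [fOf, map_add, map_smul, ethBar_incT, ethBar_uVar_mul_incT, ethBarR_psiR, incT_jYb]

lemma du_fOf (s : SymParam) : du (fOf s) = (1 / 2 : ℂ) • incT (psiR s) := by
  rw [fOf, map_add, map_smul, du_incT, du_uVar_mul_incT, zero_add]

lemma ethW_wronskian (a b : W) :
    ethW (a * ethW b - b * ethW a) = a * ethW (ethW b) - b * ethW (ethW a) := by
  rw [map_sub, ethW_mul, ethW_mul]
  ring

lemma psiR_sBracket (s₁ s₂ : SymParam) :
    psiR (sBracket s₁ s₂) =
      jY (s₁.cY * ethW (ethW s₂.cY) - s₂.cY * ethW (ethW s₁.cY)) +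
      jYb (s₁.cYb * ethW (ethW s₂.cYb) - s₂.cYb * ethW (ethW s₁.cYb)) := by
  rw [psiR, sBracket, ethW_wronskian, ethW_wronskian]

/-- For symmetry parameters `s₁, s₂` with associated functions
`f₁ = f_{s₁}`, `f₂ = f_{s₂} ∈ R[u]`, the combination
`f̂ = 𝒴₁ðf₂ + 𝒴̄₁ð̄f₂ + f₁∂_u f₂ − 𝒴₂ðf₁ − 𝒴̄₂ð̄f₁ − f₂∂_u f₁`
equals `f_{[s₁,s₂]}`, i.e. `f̂ = T̂ + (u/2)(ð𝒴̂ + ð̄𝒴̄̂)` for `(𝒴̂,𝒴̄̂,T̂) = [s₁,s₂]`: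
the `u`-components `ξ^u = f` of the asymptotic Killing vectors close under the modified
Lie bracket. -/
theorem fHat_eq_f_of_bracket (s₁ s₂ : SymParam) :
    incY s₁.cY * eth (fOf s₂) + incYb s₁.cYb * ethBar (fOf s₂) + fOf s₁ * du (fOf s₂)
      - incY s₂.cY * eth (fOf s₁) - incYb s₂.cYb * ethBar (fOf s₁) - fOf s₂ * du (fOf s₁)
      = fOf (sBracket s₁ s₂) := by
  rw [eth_fOf, eth_fOf, ethBar_fOf, ethBar_fOf, du_fOf, du_fOf]
  unfold fOf
  rw [psiR_sBracket]
  simp only [psiR, sBracket, map_add, map_sub, map_smul, incT_mul, jY_mul, jYb_mul,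
    incT_jY, incT_jYb]
  simp only [Algebra.smul_def]
  ring
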